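/- Let $f(a,b) := 4 + \frac{1}{2}\big(ab - 2a - 2b - \sqrt{ab(4-a)(4-b)}\big)$. A triple $(a,b,c) \in \mathbb{R}_{\geq 0}^3$ is representable if and only if $a + b \leq 4$ and $c \leq f(a,b)$. -/

import Mathlib

/-!
With `P = (4 - a)(4 - b)` and `Q = ab` one has `f a b = ((√P - √Q) / 2) ^ 2`, and `a + b ≤ 4`
means `Q ≤ P`; so the claim is that `(a, b, c)` is representable iff `√Q + 2√c ≤ √P`.

Necessity is Cauchy–Schwarz for the pairs `(b₁a₂, 2c₂)` and `(a₁b₃, 2c₃)`: the products of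
their entries are `ab` and `4c`, and their sums are at most `4 - a` and `4 - b`.

Sufficiency comes from the equality case. Put `p = √a`, `p' = √(4 - a)`, `q = √b`,
`q' = √(4 - b)` and `D = pq' + qp'`. Then `a₁ = 2pq'/D`, `b₁ = 2qp'/D`, `a₂ = pD/(2q')`,
`b₃ = qD/(2p')` satisfy `a₁ + b₁ = 2` and `(2 - a₂)(2 - b₃) = ((p'q' - pq) / 2) ^ 2 = f a b`,
which leaves room for any `c ≤ f a b` as `c₂c₃` with `c₃ = 2 - b₃`.
-/

def Representable (a b c : ℝ) : Prop :=
  ∃ a1 a2 b1 b3 c2 c3 : ℝ,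
    a1 ∈ Set.Icc (0:ℝ) 2 ∧ a2 ∈ Set.Icc (0:ℝ) 2 ∧ b1 ∈ Set.Icc (0:ℝ) 2 ∧
    b3 ∈ Set.Icc (0:ℝ) 2 ∧ c2 ∈ Set.Icc (0:ℝ) 2 ∧ c3 ∈ Set.Icc (0:ℝ) 2 ∧
    a1 * a2 = a ∧ b1 * b3 = b ∧ c2 * c3 = c ∧
    a1 + b1 ≤ 2 ∧ a2 + c2 ≤ 2 ∧ b3 + c3 ≤ 2


noncomputable def f (a b : ℝ) : ℝ :=
  4 + 1 / 2 * (a * b - 2 * a - 2 * b - Real.sqrt (a * b * (4 - a) * (4 - b)))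
open Set Real

lemma sqrt_mul_add_sqrt_mul_le {x₁ x₂ y₁ y₂ : ℝ} (hx₁ : 0 ≤ x₁) (hx₂ : 0 ≤ x₂) (hy₁ : 0 ≤ y₁)
    (hy₂ : 0 ≤ y₂) : √(x₁ * y₁) + √(x₂ * y₂) ≤ √((x₁ + x₂) * (y₁ + y₂)) := by
  simpa [Fin.sum_univ_two, ← sqrt_mul, hx₁, hx₂, add_nonneg hx₁ hx₂] using
    sum_sqrt_mul_sqrt_le Finset.univ (f := ![x₁, x₂]) (g := ![y₁, y₂])
      (fun i => by fin_cases i <;> assumption) (fun i => by fin_cases i <;> assumption)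

lemma f_eq_sq {a b : ℝ} (ha : 0 ≤ a) (hb : 0 ≤ b) (ha4 : a ≤ 4) (hb4 : b ≤ 4) :
    f a b = ((√((4 - a) * (4 - b)) - √(a * b)) / 2) ^ 2 := by
  have hP := sq_sqrt (mul_nonneg (sub_nonneg.2 ha4) (sub_nonneg.2 hb4))
  have hQ := sq_sqrt (mul_nonneg ha hb)
  rw [f, show a * b * (4 - a) * (4 - b) = a * b * ((4 - a) * (4 - b)) by ring,
    sqrt_mul (mul_nonneg ha hb)]
  linear_combination (-hP - hQ) / 4

lemma le_f_of_sqrt_add_le {a b c : ℝ} (ha : 0 ≤ a) (hb : 0 ≤ b) (ha4 : a ≤ 4) (hb4 : b ≤ 4)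
    (h : √(a * b) + 2 * √c ≤ √((4 - a) * (4 - b))) : c ≤ f a b := by
  rw [f_eq_sq ha hb ha4 hb4]
  calc c ≤ √c ^ 2 := sq_sqrt' ▸ le_max_left c 0
    _ ≤ _ := pow_le_pow_left₀ (sqrt_nonneg c) (by linarith) 2

lemma Representable.add_le_four {a b c : ℝ} (h : Representable a b c) : a + b ≤ 4 := by
  obtain ⟨a1, a2, b1, b3, -, -, ⟨ha1, -⟩, ⟨-, ha2⟩, ⟨hb1, -⟩, ⟨-, hb3⟩, -, -, rfl, rfl, -,
    hab, -, -⟩ := h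
  nlinarith [mul_le_mul_of_nonneg_left ha2 ha1, mul_le_mul_of_nonneg_left hb3 hb1]

lemma Representable.le_f {a b c : ℝ} (h : Representable a b c) : c ≤ f a b := by
  obtain ⟨a1, a2, b1, b3, c2, c3, ⟨ha1, -⟩, ⟨ha2, -⟩, ⟨hb1, -⟩, ⟨hb3, -⟩, ⟨hc2, -⟩,
    ⟨hc3, -⟩, rfl, rfl, rfl, hab, hac, hbc⟩ := h
  have two_sqrt : 2 * √(c2 * c3) = √(2 * c2 * (2 * c3)) := by
    rw [show 2 * c2 * (2 * c3) = 2 ^ 2 * (c2 * c3) by ring, sqrt_mul (sq_nonneg 2) (c2 * c3),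
      sqrt_sq zero_le_two]
  have key : √(a1 * a2 * (b1 * b3)) + 2 * √(c2 * c3) ≤
      √((4 - a1 * a2) * (4 - b1 * b3)) := calc
    _ = √(b1 * a2 * (a1 * b3)) + √(2 * c2 * (2 * c3)) := by rw [two_sqrt]; ring_nf
    _ ≤ √((b1 * a2 + 2 * c2) * (a1 * b3 + 2 * c3)) :=
      sqrt_mul_add_sqrt_mul_le (by positivity) (by positivity) (by positivity) (by positivity)
    _ ≤ √((4 - a1 * a2) * (4 - b1 * b3)) := sqrt_le_sqrt (by gcongr <;> nlinarith)
  exact le_f_of_sqrt_add_le (by positivity) (by positivity) (by nlinarith) (by nlinarith) key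

lemma representable_of_le_mul {a b c a1 a2 b1 b3 : ℝ} (ha1 : a1 ∈ Icc (0 : ℝ) 2)
    (ha2 : a2 ∈ Icc (0 : ℝ) 2) (hb1 : b1 ∈ Icc (0 : ℝ) 2) (hb3 : b3 ∈ Icc (0 : ℝ) 2)
    (ha : a1 * a2 = a) (hb : b1 * b3 = b) (hab : a1 + b1 ≤ 2) (hc : 0 ≤ c)
    (hc_le : c ≤ (2 - a2) * (2 - b3)) : Representable a b c := by
  rcases (sub_nonneg.2 hb3.2).eq_or_lt with hb3_two | hb3_lt
  · have hc0 : c = 0 := le_antisymm (by simpa [← hb3_two] using hc_le) hc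
    exact ⟨a1, a2, b1, b3, 0, 0, ha1, ha2, hb1, hb3, by simp, by simp, ha, hb, by simp [hc0],
      hab, by linarith [ha2.2], by linarith [hb3.2]⟩
  · have hc2 : c / (2 - b3) ≤ 2 - a2 := (div_le_iff₀ hb3_lt).2 hc_le
    exact ⟨a1, a2, b1, b3, c / (2 - b3), 2 - b3, ha1, ha2, hb1, hb3,
      ⟨by positivity, by linarith [ha2.1]⟩, ⟨hb3_lt.le, by linarith [hb3.1]⟩, ha, hb,
      div_mul_cancel₀ c hb3_lt.ne', hab, by linarith, (add_sub_cancel b3 2).le⟩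

lemma representable_sq_sq {p q p' q' c : ℝ} (hp : 0 < p) (hq : 0 < q) (hp' : 0 < p')
    (hq' : 0 < q') (hpp' : p ^ 2 + p' ^ 2 = 4) (hqq' : q ^ 2 + q' ^ 2 = 4)
    (hpq : p * q ≤ p' * q') (hc : 0 ≤ c) (hc_le : c ≤ ((p' * q' - p * q) / 2) ^ 2) :
    Representable (p ^ 2) (q ^ 2) c := by
  set D := p * q' + q * p'
  have hD_pos : 0 < D := by positivity
  have two_sub_a2 : 2 - p * D / (2 * q') = p' * (p' * q' - p * q) / (2 * q') := by
    field_simp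
    linear_combination -q' * hpp'
  have two_sub_b3 : 2 - q * D / (2 * p') = q' * (p' * q' - p * q) / (2 * p') := by
    field_simp
    linear_combination -p' * hqq'
  have hpq' : 0 ≤ p' * q' - p * q := sub_nonneg.2 hpq
  refine representable_of_le_mul (a1 := 2 * p * q' / D) (a2 := p * D / (2 * q'))
    (b1 := 2 * q * p' / D) (b3 := q * D / (2 * p')) ⟨by positivity, ?_⟩
    ⟨by positivity, ?_⟩ ⟨by positivity, ?_⟩ ⟨by positivity, ?_⟩ ?_ ?_ ?_ hc ?_
  · rw [div_le_iff₀ hD_pos]; nlinarith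
  · have : 0 ≤ p' * (p' * q' - p * q) / (2 * q') := by positivity
    linarith
  · rw [div_le_iff₀ hD_pos]; nlinarith
  · have : 0 ≤ q' * (p' * q' - p * q) / (2 * p') := by positivity
    linarith
  · field_simp
  · field_simp
  · rw [← add_div, div_le_iff₀ hD_pos]; linarith
  · rw [two_sub_a2, two_sub_b3]
    convert hc_le using 1
    field_simp

lemma representable_of_le_f {a b c : ℝ} (ha : 0 ≤ a) (hb : 0 ≤ b) (hc : 0 ≤ c)
    (hab : a + b ≤ 4) (hcf : c ≤ f a b) : Representable a b c := by
  rcases ha.eq_or_lt with rfl | ha_pos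
  · refine representable_of_le_mul (a1 := 0) (a2 := 0) (b1 := 2) (b3 := b / 2)
      ⟨le_rfl, zero_le_two⟩ ⟨le_rfl, zero_le_two⟩ ⟨zero_le_two, le_rfl⟩
      ⟨by linarith, by linarith⟩ (zero_mul 0) (by ring) (by norm_num) hc ?_
    simp only [f, zero_mul, zero_sub, sub_zero, sqrt_zero] at hcf
    linarith
  rcases hb.eq_or_lt with rfl | hb_pos
  · refine representable_of_le_mul (a1 := 2) (a2 := a / 2) (b1 := 0) (b3 := 0)
      ⟨zero_le_two, le_rfl⟩ ⟨by linarith, by linarith⟩ ⟨le_rfl, zero_le_two⟩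
      ⟨le_rfl, zero_le_two⟩ (by ring) (zero_mul 0) (by norm_num) hc ?_
    simp only [f, mul_zero, zero_mul, sub_zero, sqrt_zero] at hcf
    linarith
  have hpq : √a * √b ≤ √(4 - a) * √(4 - b) := by
    rw [← sqrt_mul ha, ← sqrt_mul (by linarith)]
    exact sqrt_le_sqrt (by nlinarith)
  have h := representable_sq_sq (sqrt_pos.2 ha_pos) (sqrt_pos.2 hb_pos)
    (sqrt_pos.2 (by linarith : 0 < 4 - a)) (sqrt_pos.2 (by linarith : 0 < 4 - b))
    (by rw [sq_sqrt ha, sq_sqrt (by linarith)]; ring)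
    (by rw [sq_sqrt hb, sq_sqrt (by linarith)]; ring) hpq hc
    (by rwa [← sqrt_mul ha, ← sqrt_mul (by linarith), ← f_eq_sq ha hb (by linarith) (by linarith)])
  rwa [sq_sqrt ha, sq_sqrt hb] at h

theorem stmt_7 (a b c : ℝ) (ha : 0 ≤ a) (hb : 0 ≤ b) (hc : 0 ≤ c) :
    Representable a b c ↔ a + b ≤ 4 ∧ c ≤ f a b :=
  ⟨fun h => ⟨h.add_le_four, h.le_f⟩, fun ⟨hab, hcf⟩ => representable_of_le_f ha hb hc hab hcf⟩
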